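/- arXiv:1803.01178 — 4 statements merged into one kernel-verified Lean document; each statement's English description precedes it below -/
import Mathlib

section
/- Let V be a finite-dimensional real vector space with inner product g, and let J₊, J₋ be g-orthogonal complex structures on V (J₊² = J₋² = -id, g(J±u, J±v) = g(u,v)). Set ω± = g∘J± (i.e. ω±(u,v) = g(J±u, v)). Define the generalized complex structure 𝕁₂ on V ⊕ V* by the Gualtieri map: 𝕁₂(X,ξ) = ((1/2)((-J₊+J₋)X + (ω₊⁻¹+ω₋⁻¹)ξ), (1/2)((-ω₊-ω₋)X + (J₊*-J₋*)ξ)). Then for X ∈ V, ξ, α ∈ V*, the equation 𝕁₂(X,ξ) = (0, α) holds if and only if J₊(X + g⁻¹ξ) = J₋(X - g⁻¹ξ) = -g⁻¹α. -/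
/-!
Both components of `𝕁₂` are computed through the Riesz isomorphism `♯ = g⁻¹` and its inverse
`♭`. Since `J±` is orthogonal with `J±² = -1`, it is skew-adjoint; hence `ω±⁻¹ ξ = -J±(♯ξ)`, `J±* ξ = ♭(-J±(♯ξ))`
and `ω± X = ♭(J± X)`. The vector part of `𝕁₂(X,ξ)` becomes `½(J₋(X - ♯ξ) - J₊(X + ♯ξ))`, the
covector part `♭(-½(J₊(X + ♯ξ) + J₋(X - ♯ξ)))`, and the equivalence is then linear algebra.
-/

section Riesz

variable {V : Type*} [NormedAddCommGroup V] [InnerProductSpace ℝ V]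

theorem inner_apply_right_eq_neg_of_sq_eq_neg (J : V →ₗ[ℝ] V) (hJ2 : ∀ v, J (J v) = -v)
    (hJO : ∀ u v : V, (inner ℝ (J u) (J v) : ℝ) = inner ℝ u v) (u v : V) :
    (inner ℝ u (J v) : ℝ) = -inner ℝ (J u) v := by
  rw [← hJO u (J v), hJ2, inner_neg_right]

theorem eq_symm_of_apply_eq_inner (sharp : Module.Dual ℝ V ≃ₗ[ℝ] V)
    (hsharp : ∀ (ξ : Module.Dual ℝ V) (v : V), ξ v = (inner ℝ (sharp ξ) v : ℝ))
    {η : Module.Dual ℝ V} {w : V} (h : ∀ v, η v = (inner ℝ w v : ℝ)) : η = sharp.symm w := by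
  rw [LinearEquiv.eq_symm_apply]
  exact ext_inner_right ℝ fun v => by rw [← hsharp, h]

theorem dualMap_eq_symm_neg_of_sq_eq_neg (sharp : Module.Dual ℝ V ≃ₗ[ℝ] V)
    (hsharp : ∀ (ξ : Module.Dual ℝ V) (v : V), ξ v = (inner ℝ (sharp ξ) v : ℝ))
    (J : V →ₗ[ℝ] V) (hJ2 : ∀ v, J (J v) = -v)
    (hJO : ∀ u v : V, (inner ℝ (J u) (J v) : ℝ) = inner ℝ u v) (ξ : Module.Dual ℝ V) :
    J.dualMap ξ = sharp.symm (-J (sharp ξ)) :=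
  eq_symm_of_apply_eq_inner sharp hsharp fun v => by
    rw [LinearMap.dualMap_apply, hsharp, inner_apply_right_eq_neg_of_sq_eq_neg J hJ2 hJO,
      inner_neg_left]

theorem form_inv_eq_neg_of_sq_eq_neg (sharp : Module.Dual ℝ V ≃ₗ[ℝ] V)
    (hsharp : ∀ (ξ : Module.Dual ℝ V) (v : V), ξ v = (inner ℝ (sharp ξ) v : ℝ))
    (J : V →ₗ[ℝ] V) (hJ2 : ∀ v, J (J v) = -v)
    (ω : V →ₗ[ℝ] Module.Dual ℝ V) (hω : ∀ u v, ω u v = (inner ℝ (J u) v : ℝ))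
    (ωInv : Module.Dual ℝ V →ₗ[ℝ] V) (hωInv : ∀ u, ωInv (ω u) = u) (ξ : Module.Dual ℝ V) :
    ωInv ξ = -J (sharp ξ) := by
  have hω_neg : ω (-J (sharp ξ)) = ξ := by
    rw [eq_symm_of_apply_eq_inner sharp hsharp (hω _), map_neg, hJ2, neg_neg,
      LinearEquiv.symm_apply_apply]
  rw [← hωInv (-J (sharp ξ)), hω_neg]

end Riesz

theorem half_smul_sub_eq_zero_and_neg_half_smul_add_eq_iff {M : Type*} [AddCommGroup M]
    [Module ℝ M] (a b c : M) :
    ((1 / 2 : ℝ) • (b - a) = 0 ∧ -(1 / 2 : ℝ) • (a + b) = c) ↔ (a = b ∧ a = -c) := by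
  constructor
  · rintro ⟨hab, hc⟩
    have hab' : a = b := by linear_combination (norm := module) (-2 : ℝ) • hab
    exact ⟨hab', by linear_combination (norm := module) (1 / 2 : ℝ) • hab' - hc⟩
  · rintro ⟨hab, hc⟩
    refine ⟨by rw [hab, sub_self, smul_zero], ?_⟩
    linear_combination (norm := module) (1 / 2 : ℝ) • hab - hc

theorem stmt0_general
    {V : Type*} [NormedAddCommGroup V] [InnerProductSpace ℝ V]
    (Jp Jm : V →ₗ[ℝ] V)
    (hJp2 : ∀ v, Jp (Jp v) = -v) (hJm2 : ∀ v, Jm (Jm v) = -v)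
    (hJpO : ∀ u v : V, (inner ℝ (Jp u) (Jp v) : ℝ) = inner ℝ u v)
    (hJmO : ∀ u v : V, (inner ℝ (Jm u) (Jm v) : ℝ) = inner ℝ u v)
    (sharp : Module.Dual ℝ V ≃ₗ[ℝ] V)
    (hsharp : ∀ (ξ : Module.Dual ℝ V) (v : V), ξ v = (inner ℝ (sharp ξ) v : ℝ))
    (ωp ωm : V →ₗ[ℝ] Module.Dual ℝ V)
    (hωp : ∀ u v, ωp u v = (inner ℝ (Jp u) v : ℝ))
    (hωm : ∀ u v, ωm u v = (inner ℝ (Jm u) v : ℝ))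
    (ωpInv ωmInv : Module.Dual ℝ V →ₗ[ℝ] V)
    (hωpInv₂ : ∀ u, ωpInv (ωp u) = u)
    (hωmInv₂ : ∀ u, ωmInv (ωm u) = u)
    (X : V) (ξ α : Module.Dual ℝ V) :
    ((1 / 2 : ℝ) • ((-(Jp X) + Jm X) + (ωpInv ξ + ωmInv ξ)) = 0 ∧
      (1 / 2 : ℝ) • ((-(ωp X) - ωm X) + (Jp.dualMap ξ - Jm.dualMap ξ)) = α)
    ↔ (Jp (X + sharp ξ) = Jm (X - sharp ξ) ∧ Jp (X + sharp ξ) = -(sharp α)) := by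
  have hvector : (1 / 2 : ℝ) • ((-(Jp X) + Jm X) + (ωpInv ξ + ωmInv ξ)) =
      (1 / 2 : ℝ) • (Jm (X - sharp ξ) - Jp (X + sharp ξ)) := by
    rw [form_inv_eq_neg_of_sq_eq_neg sharp hsharp Jp hJp2 ωp hωp ωpInv hωpInv₂,
      form_inv_eq_neg_of_sq_eq_neg sharp hsharp Jm hJm2 ωm hωm ωmInv hωmInv₂, map_add, map_sub]
    module
  have hcovector : (1 / 2 : ℝ) • ((-(ωp X) - ωm X) + (Jp.dualMap ξ - Jm.dualMap ξ)) =
      sharp.symm (-(1 / 2 : ℝ) • (Jp (X + sharp ξ) + Jm (X - sharp ξ))) := by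
    rw [eq_symm_of_apply_eq_inner sharp hsharp (hωp X),
      eq_symm_of_apply_eq_inner sharp hsharp (hωm X),
      dualMap_eq_symm_neg_of_sq_eq_neg sharp hsharp Jp hJp2 hJpO,
      dualMap_eq_symm_neg_of_sq_eq_neg sharp hsharp Jm hJm2 hJmO]
    simp only [map_smul, map_add, map_sub, map_neg]
    module
  rw [hvector, hcovector, LinearEquiv.symm_apply_eq]
  exact half_smul_sub_eq_zero_and_neg_half_smul_add_eq_iff _ _ _

/-- Pointwise linear-algebra content of Lemma 4.2: the moment map equation
`𝕁₂(X,ξ) = (0,α)` (with `𝕁₂` given by the Gualtieri map) is equivalent to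
`J₊(X + g⁻¹ξ) = J₋(X - g⁻¹ξ) = -g⁻¹α`. -/
theorem stmt0
    {V : Type*} [NormedAddCommGroup V] [InnerProductSpace ℝ V] [FiniteDimensional ℝ V]
    (Jp Jm : V →ₗ[ℝ] V)
    (hJp2 : ∀ v, Jp (Jp v) = -v) (hJm2 : ∀ v, Jm (Jm v) = -v)
    (hJpO : ∀ u v : V, (inner ℝ (Jp u) (Jp v) : ℝ) = inner ℝ u v)
    (hJmO : ∀ u v : V, (inner ℝ (Jm u) (Jm v) : ℝ) = inner ℝ u v)
    (sharp : Module.Dual ℝ V ≃ₗ[ℝ] V)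
    (hsharp : ∀ (ξ : Module.Dual ℝ V) (v : V), ξ v = (inner ℝ (sharp ξ) v : ℝ))
    (ωp ωm : V →ₗ[ℝ] Module.Dual ℝ V)
    (hωp : ∀ u v, ωp u v = (inner ℝ (Jp u) v : ℝ))
    (hωm : ∀ u v, ωm u v = (inner ℝ (Jm u) v : ℝ))
    (ωpInv ωmInv : Module.Dual ℝ V →ₗ[ℝ] V)
    (hωpInv₁ : ∀ ξ, ωp (ωpInv ξ) = ξ) (hωpInv₂ : ∀ u, ωpInv (ωp u) = u)
    (hωmInv₁ : ∀ ξ, ωm (ωmInv ξ) = ξ) (hωmInv₂ : ∀ u, ωmInv (ωm u) = u)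
    (X : V) (ξ α : Module.Dual ℝ V) :
    ((1 / 2 : ℝ) • ((-(Jp X) + Jm X) + (ωpInv ξ + ωmInv ξ)) = 0 ∧
      (1 / 2 : ℝ) • ((-(ωp X) - ωm X) + (Jp.dualMap ξ - Jm.dualMap ξ)) = α)
    ↔ (Jp (X + sharp ξ) = Jm (X - sharp ξ) ∧ Jp (X + sharp ξ) = -(sharp α)) :=
  stmt0_general Jp Jm hJp2 hJm2 hJpO hJmO sharp hsharp ωp ωm hωp hωm ωpInv ωmInv hωpInv₂ hωmInv₂ X ξ
    α
end

section
/- Let E be a finite-dimensional vector space with a symmetric nondegenerate bilinear form of split signature, and let 𝒢 be a self-adjoint orthogonal operator with ⟨𝒢e,e⟩ > 0 for all e ≠ 0. Let K ⊆ E be an isotropic subspace. Then the natural map K⊥ ∩ 𝒢(K⊥) → K⊥/K is a linear isomorphism. -/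
/-!
Since `G` is a self-adjoint involution, `g a b := B (G a) b` is a positive definite form
and `G (K⊥) = K^{⊥g}`. Positivity makes `K` and `K^{⊥g}` complementary, and as `K ≤ K⊥`
the modular law then splits `K⊥ = K ⊕ (K⊥ ⊓ G (K⊥))`.
-/

namespace Submodule

variable {R M : Type*} [Ring R] [AddCommGroup M] [Module R M]

theorem bijective_mkQ_comp_inclusion_inf_of_isCompl {K P Q : Submodule R M} (hKP : K ≤ P)
    (hKQ : IsCompl K Q) :
    Function.Bijective
      ((K.comap P.subtype).mkQ.comp (inclusion (inf_le_left : P ⊓ Q ≤ P))) := by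
  constructor
  · rw [injective_iff_map_eq_zero]
    rintro ⟨x, _, hxQ⟩ hx
    have hxK : x ∈ K := by simpa using hx
    exact Subtype.ext (hKQ.disjoint.le_bot ⟨hxK, hxQ⟩)
  · intro q
    obtain ⟨w, rfl⟩ := mkQ_surjective _ q
    obtain ⟨k, hk, u, hu, hku⟩ := mem_sup.mp (hKQ.sup_eq_top ▸ mem_top : (w : M) ∈ K ⊔ Q)
    have hu_eq : u = w - k := eq_sub_of_add_eq' hku
    have huP : u ∈ P := hu_eq ▸ P.sub_mem w.2 (hKP hk)
    refine ⟨⟨u, huP, hu⟩, (Quotient.eq _).mpr ?_⟩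
    simpa [hu_eq] using K.neg_mem hk

end Submodule

namespace LinearMap.BilinForm

variable {R M : Type*} [CommRing R] [AddCommGroup M] [Module R M]

theorem disjoint_orthogonal_of_anisotropic (B : LinearMap.BilinForm R M) {W : Submodule R M}
    (hW : ∀ x ∈ W, B x x = 0 → x = 0) : Disjoint W (B.orthogonal W) :=
  Submodule.disjoint_def.mpr fun x hxW hxW' => hW x hxW (hxW' x hxW)

theorem involutive_of_isometry_of_selfAdjoint (B : LinearMap.BilinForm R M)
    (hB : ∀ a, (∀ b, B a b = 0) → a = 0) {G : M →ₗ[R] M}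
    (hGO : ∀ a b, B (G a) (G b) = B a b)
    (hGsa : ∀ a b, B (G a) b = B a (G b)) :
    Function.Involutive G := fun a =>
  sub_eq_zero.mp <| hB _ fun b => by rw [map_sub, LinearMap.sub_apply, hGsa, hGO, sub_self]

theorem map_orthogonal_eq_orthogonal_comp (B : LinearMap.BilinForm R M) {G : M →ₗ[R] M}
    (hGsa : ∀ a b, B (G a) b = B a (G b)) (hG : Function.Involutive G) (W : Submodule R M) :
    (B.orthogonal W).map G = LinearMap.BilinForm.orthogonal (B ∘ₗ G) W := by
  ext x
  constructor
  · rintro ⟨y, hy, rfl⟩ m hm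
    show B (G m) (G y) = 0
    rw [hGsa, hG]
    exact hy m hm
  · intro hx
    refine ⟨G x, fun m hm => ?_, hG x⟩
    show B m (G x) = 0
    rw [← hGsa]
    exact hx m hm

end LinearMap.BilinForm

theorem stmt5_general
    {E : Type*} [AddCommGroup E] [Module ℝ E] [FiniteDimensional ℝ E]
    (B : LinearMap.BilinForm ℝ E)
    (hsymm : ∀ a b, B a b = B b a)
    (hnd : ∀ a, (∀ b, B a b = 0) → a = 0)
    (G : E →ₗ[ℝ] E)
    (hGO : ∀ a b, B (G a) (G b) = B a b)
    (hGsa : ∀ a b, B (G a) b = B a (G b))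
    (hpos : ∀ e : E, e ≠ 0 → 0 < B (G e) e)
    (K : Submodule ℝ E)
    (hKle : K ≤ B.orthogonal K) :
    Function.Bijective
      ((Submodule.comap (B.orthogonal K).subtype K).mkQ.comp
        (Submodule.inclusion (inf_le_left :
          B.orthogonal K ⊓ (B.orthogonal K).map G ≤ B.orthogonal K))) := by
  have hG := LinearMap.BilinForm.involutive_of_isometry_of_selfAdjoint B hnd hGO hGsa
  have hrefl : (B ∘ₗ G).IsRefl := fun a b h => by
    show B (G b) a = 0
    rwa [hsymm, ← hGsa]
  have hanis : ∀ x ∈ K, (B ∘ₗ G) x x = 0 → x = 0 := fun x _ hx =>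
    not_not.mp fun hx0 => (hpos x hx0).ne' hx
  refine Submodule.bijective_mkQ_comp_inclusion_inf_of_isCompl hKle ?_
  rw [LinearMap.BilinForm.map_orthogonal_eq_orthogonal_comp B hGsa hG]
  exact (LinearMap.BilinForm.isCompl_orthogonal_iff_disjoint hrefl).mpr
    (LinearMap.BilinForm.disjoint_orthogonal_of_anisotropic _ hanis)

/-- For a generalized metric `𝒢` on a split-signature space and an isotropic
subspace `K`, the natural map `K⊥ ∩ 𝒢(K⊥) → K⊥/K` is a linear isomorphism. -/
theorem stmt5
    {E : Type*} [AddCommGroup E] [Module ℝ E] [FiniteDimensional ℝ E]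
    (B : LinearMap.BilinForm ℝ E)
    (hsymm : ∀ a b, B a b = B b a)
    (hnd : ∀ a, (∀ b, B a b = 0) → a = 0)
    (hsplit : ∃ N : Submodule ℝ E, (∀ x ∈ N, ∀ y ∈ N, B x y = 0) ∧
      2 * Module.finrank ℝ N = Module.finrank ℝ E)
    (G : E →ₗ[ℝ] E)
    (hGO : ∀ a b, B (G a) (G b) = B a b)
    (hGsa : ∀ a b, B (G a) b = B a (G b))
    (hpos : ∀ e : E, e ≠ 0 → 0 < B (G e) e)
    (K : Submodule ℝ E)
    (hKiso : ∀ x ∈ K, ∀ y ∈ K, B x y = 0)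
    (hKle : K ≤ B.orthogonal K) :
    Function.Bijective
      ((Submodule.comap (B.orthogonal K).subtype K).mkQ.comp
        (Submodule.inclusion (inf_le_left :
          B.orthogonal K ⊓ (B.orthogonal K).map G ≤ B.orthogonal K))) :=
  stmt5_general B hsymm hnd G hGO hGsa hpos K hKle
end

section
/- Let E be a vector space with nondegenerate symmetric pairing, L ⊆ E⊗ℂ a maximal isotropic subspace with L ∩ L̄ = 0 (a linear generalized complex structure), and K̃ ⊆ E an isotropic subspace with complexification K̃_ℂ satisfying K̃_ℂ = (L ∩ K̃_ℂ) ⊕ (L̄ ∩ K̃_ℂ). Set 𝒜 = L ∩ K̃_ℂ⊥. If dim K̃ = 2 dim 𝔤 and dim(L ∩ K̃_ℂ) = dim 𝔤, then dim 𝒜 = (1/2) dim E - dim 𝔤 and 𝒜 ⊕ 𝒜̄ = K̃_ℂ⊥. -/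
open Module

lemma aux_rank_map {Ec : Type*} [AddCommGroup Ec] [Module ℂ Ec]
    (σ : Ec →ₛₗ[starRingEnd ℂ] Ec) (hσ2 : ∀ x, σ (σ x) = x) (p : Submodule ℂ Ec) :
    Module.finrank ℂ (p.map σ) = Module.finrank ℂ p := by
  let j : p ≃+ (p.map σ) :=
    { toFun := fun x => ⟨σ x, Submodule.mem_map_of_mem x.2⟩
      invFun := fun y => ⟨σ y.1, by
        obtain ⟨z, hz, h⟩ := y.2
        rw [← h, hσ2]; exact hz⟩
      left_inv := fun x => Subtype.ext (hσ2 x)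
      right_inv := fun y => Subtype.ext (hσ2 y.1)
      map_add' := fun a b => Subtype.ext (σ.map_add a b) }
  have hr : Module.rank ℂ p = Module.rank ℂ (p.map σ) := by
    refine rank_eq_of_equiv_equiv (⟨(starRingEnd ℂ), map_zero _⟩ : ZeroHom ℂ ℂ) j
      ⟨star_injective, fun x => ⟨star x, star_star x⟩⟩ fun r m => Subtype.ext (σ.map_smulₛₗ r m.1)
  simp [Module.finrank, hr]

/-- Algebraic content of Theorem 6.8: for a linear generalized complex structure
`L` (maximal isotropic with `L ∩ L̄ = 0`) and an isotropic subspace `K̃` with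
`K̃_ℂ = (L ∩ K̃_ℂ) ⊕ (L̄ ∩ K̃_ℂ)`, `dim K̃_ℂ = 2 dim 𝔤`, `dim(L ∩ K̃_ℂ) = dim 𝔤`,
the subspace `𝒜 = L ∩ K̃_ℂ⊥` satisfies `𝒜 ⊕ 𝒜̄ = K̃_ℂ⊥` and
`dim 𝒜 = (1/2) dim E - dim 𝔤`. Conjugation is encoded by the antilinear
involution `σ`. -/
theorem stmt14
    {Ec : Type*} [AddCommGroup Ec] [Module ℂ Ec] [FiniteDimensional ℂ Ec]
    (B : LinearMap.BilinForm ℂ Ec)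
    (hsymm : ∀ a b, B a b = B b a)
    (hnd : ∀ a, (∀ b, B a b = 0) → a = 0)
    (σ : Ec →ₛₗ[starRingEnd ℂ] Ec)
    (hσ2 : ∀ x, σ (σ x) = x)
    (hσB : ∀ x y, B (σ x) (σ y) = star (B x y))
    (L : Submodule ℂ Ec)
    (hLiso : ∀ x ∈ L, ∀ y ∈ L, B x y = 0)
    (hLmax : 2 * Module.finrank ℂ L = Module.finrank ℂ Ec)
    (hLreal : L ⊓ L.map σ = ⊥)
    (Kt : Submodule ℂ Ec)
    (hKσ : Kt.map σ = Kt)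
    (hKiso : ∀ x ∈ Kt, ∀ y ∈ Kt, B x y = 0)
    (hKsplit : (L ⊓ Kt) ⊔ (L.map σ ⊓ Kt) = Kt)
    (d n : ℕ)
    (hdim : Module.finrank ℂ Ec = 2 * n)
    (hKd : Module.finrank ℂ Kt = 2 * d)
    (hLKd : Module.finrank ℂ (L ⊓ Kt : Submodule ℂ Ec) = d) :
    ((L ⊓ B.orthogonal Kt) ⊔ (L ⊓ B.orthogonal Kt).map σ = B.orthogonal Kt ∧
      (L ⊓ B.orthogonal Kt) ⊓ (L ⊓ B.orthogonal Kt).map σ = ⊥) ∧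
      Module.finrank ℂ (L ⊓ B.orthogonal Kt : Submodule ℂ Ec) = n - d := by
  have hrefl : B.IsRefl := fun x y h => by rw [hsymm]; exact h
  have hND : B.Nondegenerate := (LinearMap.IsRefl.nondegenerate_iff_separatingLeft hrefl).2 hnd
  -- basic dimensions
  have hfrL : Module.finrank ℂ L = n := by omega
  have hKle : Module.finrank ℂ Kt ≤ Module.finrank ℂ Ec := Submodule.finrank_le Kt
  have hfrW : Module.finrank ℂ (B.orthogonal Kt) = 2 * n - 2 * d := by
    rw [LinearMap.BilinForm.finrank_orthogonal hND, hdim, hKd]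
  -- L is self-orthogonal
  have hLperp : B.orthogonal L = L := by
    have hle : L ≤ B.orthogonal L := fun x hx =>
      (LinearMap.BilinForm.mem_orthogonal_iff).2 fun y hy => hLiso y hy x hx
    have hfr : Module.finrank ℂ (B.orthogonal L) = n := by
      rw [LinearMap.BilinForm.finrank_orthogonal hND, hdim, hfrL]; omega
    exact (Submodule.eq_of_le_of_finrank_le hle (by rw [hfr, hfrL])).symm
  -- A = (L ⊔ Kt)^⊥
  have hAorth : L ⊓ B.orthogonal Kt = B.orthogonal (L ⊔ Kt) := by
    apply le_antisymm
    · rintro x ⟨hxL, hxW⟩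
      rw [LinearMap.BilinForm.mem_orthogonal_iff]
      intro y hy
      obtain ⟨a, ha, b, hb, rfl⟩ := Submodule.mem_sup.1 hy
      have h1 : B a x = 0 := by
        rw [← hLperp] at hxL; exact hxL a ha
      have h2 : B b x = 0 := hxW b hb
      simp [LinearMap.BilinForm.IsOrtho, h1, h2]
    · intro x hx
      have hx' := LinearMap.BilinForm.mem_orthogonal_iff.1 hx
      constructor
      · rw [← hLperp]
        exact LinearMap.BilinForm.mem_orthogonal_iff.2
          fun y hy => hx' y (Submodule.mem_sup_left hy)
      · exact LinearMap.BilinForm.mem_orthogonal_iff.2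
          fun y hy => hx' y (Submodule.mem_sup_right hy)
  have hsupdim : Module.finrank ℂ (L ⊔ Kt : Submodule ℂ Ec) = n + d := by
    have := Submodule.finrank_sup_add_finrank_inf_eq L Kt
    rw [hLKd, hfrL, hKd] at this
    omega
  have hsuple : Module.finrank ℂ (L ⊔ Kt : Submodule ℂ Ec) ≤ Module.finrank ℂ Ec :=
    Submodule.finrank_le _
  have hdn : d ≤ n := by omega
  have hfrA : Module.finrank ℂ (L ⊓ B.orthogonal Kt : Submodule ℂ Ec) = n - d := by
    rw [hAorth, LinearMap.BilinForm.finrank_orthogonal hND, hsupdim, hdim]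
    omega
  -- σ maps W into W
  have hWσ : (B.orthogonal Kt).map σ ≤ B.orthogonal Kt := by
    rintro x ⟨y, hy, rfl⟩
    rw [LinearMap.BilinForm.mem_orthogonal_iff]
    intro k hk
    rw [← hKσ] at hk
    obtain ⟨k', hk', rfl⟩ := hk
    show B (σ k') (σ y) = 0
    rw [hσB, hy k' hk']
    simp
  -- intersection is trivial
  have hint : (L ⊓ B.orthogonal Kt) ⊓ (L ⊓ B.orthogonal Kt).map σ = ⊥ := by
    rw [← le_bot_iff, ← hLreal]
    exact inf_le_inf inf_le_left (Submodule.map_mono inf_le_left)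
  -- sup
  have hAmapfr : Module.finrank ℂ ((L ⊓ B.orthogonal Kt).map σ) = n - d := by
    rw [aux_rank_map σ hσ2, hfrA]
  have hsupA : (L ⊓ B.orthogonal Kt) ⊔ (L ⊓ B.orthogonal Kt).map σ = B.orthogonal Kt := by
    have hle : (L ⊓ B.orthogonal Kt) ⊔ (L ⊓ B.orthogonal Kt).map σ ≤ B.orthogonal Kt :=
      sup_le inf_le_right ((Submodule.map_mono inf_le_right).trans hWσ)
    refine Submodule.eq_of_le_of_finrank_le hle ?_
    have := Submodule.finrank_sup_add_finrank_inf_eq (L ⊓ B.orthogonal Kt)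
      ((L ⊓ B.orthogonal Kt).map σ)
    rw [hint, finrank_bot, hfrA, hAmapfr] at this
    omega
  exact ⟨⟨hsupA, hint⟩, hfrA⟩
end

section
/- Let V be a vector space with complex structures J₊, J₋, metric g Hermitian for both, and let 𝔤 act with vectors X_ς, covectors ξ_ς satisfying J₊(X_ς + g⁻¹ξ_ς) = J₋(X_ς - g⁻¹ξ_ς) =: Y_ς. Define g₀ on the span of {X_ς, Y_ς} by g₀(X_ς,X_ζ) = g₀(Y_ς,Y_ζ) = g(X_ς,X_ζ) + g(g⁻¹ξ_ς, g⁻¹ξ_ζ) and g₀(X_ς,Y_ζ) = g(X_ς,Y_ζ), and J₀ by J₀X_ς = Y_ς, J₀Y_ς = -X_ς. Then g₀ is symmetric and Hermitian with respect to J₀: g₀(J₀u, J₀v) = g₀(u,v). -/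
/-!
Both identities come from the orthogonality of `J₊` and `J₋`. The first is the isometry of `J₊`
applied to `X_ς + g⁻¹ξ_ς`, `X_ζ + g⁻¹ξ_ζ`, where the skew condition kills the cross terms. For the
second, a complex structure that preserves `g` is skew-adjoint, so `g(u, J v) + g(v, J u) = 0`;
writing this for `J₊` on `X + g⁻¹ξ` and for `J₋` on `X - g⁻¹ξ` and adding, the `ξ`-terms cancel
and what remains is `2 (g(X_ς, Y_ζ) + g(X_ζ, Y_ς))`.
-/

open scoped RealInnerProductSpace

section

variable {V : Type*} [NormedAddCommGroup V] [InnerProductSpace ℝ V]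

theorem real_inner_add_add_of_inner_add_inner_eq_zero {a b c d : V}
    (h : ⟪b, c⟫ + ⟪d, a⟫ = 0) : ⟪a + b, c + d⟫ = ⟪a, c⟫ + ⟪b, d⟫ := by
  simp only [inner_add_left, inner_add_right]
  rw [real_inner_comm a d] at h
  linarith

theorem real_inner_apply_eq_neg_of_isometry {J : V → V} (hJ2 : ∀ v, J (J v) = -v)
    (hJO : ∀ u v, ⟪J u, J v⟫ = ⟪u, v⟫) (u v : V) : ⟪u, J v⟫ = -⟪J u, v⟫ := by
  rw [← hJO u, hJ2, inner_neg_right]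

theorem real_inner_apply_add_real_inner_apply_eq_zero {J : V → V} (hJ2 : ∀ v, J (J v) = -v)
    (hJO : ∀ u v, ⟪J u, J v⟫ = ⟪u, v⟫) (u v : V) : ⟪u, J v⟫ + ⟪v, J u⟫ = 0 := by
  rw [real_inner_apply_eq_neg_of_isometry hJ2 hJO u v, real_inner_comm]
  ring

theorem real_inner_add_real_inner_eq_zero_of_apply_add_eq_apply_sub {Jp Jm : V → V}
    (hJp2 : ∀ v, Jp (Jp v) = -v) (hJm2 : ∀ v, Jm (Jm v) = -v)
    (hJpO : ∀ u v, ⟪Jp u, Jp v⟫ = ⟪u, v⟫) (hJmO : ∀ u v, ⟪Jm u, Jm v⟫ = ⟪u, v⟫)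
    {x e x' e' : V} (hY : Jp (x + e) = Jm (x - e)) (hY' : Jp (x' + e') = Jm (x' - e')) :
    ⟪x, Jp (x' + e')⟫ + ⟪x', Jp (x + e)⟫ = 0 := by
  have hp := real_inner_apply_add_real_inner_apply_eq_zero hJp2 hJpO (x + e) (x' + e')
  have hm := real_inner_apply_add_real_inner_apply_eq_zero hJm2 hJmO (x - e) (x' - e')
  rw [← hY, ← hY'] at hm
  simp only [inner_add_left, inner_sub_left] at hp hm
  linarith

end

/-- Pointwise compatibility claim of Theorem 7.1: with
`Y_ς = J₊(X_ς + g⁻¹ξ_ς) = J₋(X_ς - g⁻¹ξ_ς)` and the skew condition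
`ξ_ς(X_ζ) + ξ_ζ(X_ς) = 0`, the metric `g₀` defined by
`g₀(X_ς,X_ζ) = g₀(Y_ς,Y_ζ) = g(X_ς,X_ζ) + g(g⁻¹ξ_ς, g⁻¹ξ_ζ)` and
`g₀(X_ς,Y_ζ) = g(X_ς,Y_ζ)` is symmetric and Hermitian w.r.t. `J₀`
(`J₀X_ς = Y_ς`, `J₀Y_ς = -X_ς`); concretely
`g(Y_ς,Y_ζ) = g(X_ς,X_ζ) + g(g⁻¹ξ_ς, g⁻¹ξ_ζ)` and
`g(X_ς,Y_ζ) + g(X_ζ,Y_ς) = 0`. -/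
theorem stmt17
    {V 𝔤 : Type*} [NormedAddCommGroup V] [InnerProductSpace ℝ V]
    [AddCommGroup 𝔤] [Module ℝ 𝔤]
    (Jp Jm : V →ₗ[ℝ] V)
    (hJp2 : ∀ v, Jp (Jp v) = -v) (hJm2 : ∀ v, Jm (Jm v) = -v)
    (hJpO : ∀ u v : V, (inner ℝ (Jp u) (Jp v) : ℝ) = inner ℝ u v)
    (hJmO : ∀ u v : V, (inner ℝ (Jm u) (Jm v) : ℝ) = inner ℝ u v)
    (X ξs : 𝔤 →ₗ[ℝ] V)
    (hY : ∀ ς, Jp (X ς + ξs ς) = Jm (X ς - ξs ς))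
    (hskew : ∀ ς ζ, (inner ℝ (ξs ς) (X ζ) : ℝ) + inner ℝ (ξs ζ) (X ς) = 0) :
    (∀ ς ζ, (inner ℝ (Jp (X ς + ξs ς)) (Jp (X ζ + ξs ζ)) : ℝ)
        = inner ℝ (X ς) (X ζ) + inner ℝ (ξs ς) (ξs ζ)) ∧
      (∀ ς ζ, (inner ℝ (X ς) (Jp (X ζ + ξs ζ)) : ℝ)
        + inner ℝ (X ζ) (Jp (X ς + ξs ς)) = 0) :=
  ⟨fun ς ζ => (hJpO _ _).trans (real_inner_add_add_of_inner_add_inner_eq_zero (hskew ς ζ)),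
    fun ς ζ => real_inner_add_real_inner_eq_zero_of_apply_add_eq_apply_sub hJp2 hJm2 hJpO hJmO
      (hY ς) (hY ζ)⟩
end
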